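/- Let X be a finite graph with |E(X)| edges and maximal degree deg(X). Then for all 0 ≤ λ < 1, F₁(X)(λ) − F₁(X)(0) ≤ 2·|E(X)|·deg(X)·λ, where F₁(X) is the spectral density function of the boundary map c₁ : ℓ²(E(X)) → ℓ²(V(X)). -/

import Mathlib

open scoped RealInnerProductSpace

variable {V E : Type*}

noncomputable def c1 [Fintype E] [DecidableEq V] (v0 v1 : E → V) :
    EuclideanSpace ℝ E →ₗ[ℝ] EuclideanSpace ℝ V where
  toFun a := WithLp.toLp 2 (fun v =>
    (∑ e ∈ Finset.univ.filter (fun e => v1 e = v), a e)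
      - (∑ e ∈ Finset.univ.filter (fun e => v0 e = v), a e))
  map_add' a b := by
    ext v
    simp [PiLp.add_apply, Finset.sum_add_distrib]
    try ring
  map_smul' c a := by
    ext v
    simp [PiLp.smul_apply, smul_eq_mul, ← Finset.mul_sum, mul_sub]

/-- Spectral density function of a linear map of inner product spaces. -/
noncomputable def sdf {V W : Type*} [NormedAddCommGroup V] [InnerProductSpace ℝ V]
    [NormedAddCommGroup W] [InnerProductSpace ℝ W]
    (f : V →ₗ[ℝ] W) (lam : ℝ) : ℕ :=
  sSup {n : ℕ | ∃ U : Submodule ℝ V, Module.finrank ℝ U = n ∧ ∀ v ∈ U, ‖f v‖ ≤ lam * ‖v‖}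

/-- Degree of a vertex in a finite directed multigraph (loops count twice). -/
def vdeg [Fintype E] [DecidableEq V] (v0 v1 : E → V) (v : V) : ℕ :=
  (Finset.univ.filter fun e => v0 e = v).card + (Finset.univ.filter fun e => v1 e = v).card

/-- Maximal vertex degree of a finite multigraph. -/
def maxDeg [Fintype V] [Fintype E] [DecidableEq V] (v0 v1 : E → V) : ℕ :=
  Finset.univ.sup (vdeg v0 v1)

/-- The simple graph underlying a directed multigraph. -/
def supportGraph (v0 v1 : E → V) : SimpleGraph V where
  Adj u w := u ≠ w ∧ ∃ e, (v0 e = u ∧ v1 e = w) ∨ (v0 e = w ∧ v1 e = u)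
  symm := ⟨by
    rintro u w ⟨h, e, he⟩
    exact ⟨h.symm, e, he.symm⟩⟩
  loopless := ⟨by rintro u ⟨h, _⟩; exact h rfl⟩

/-!
Write `A = c₁`, so that `A†x = (x(v₁ e) - x(v₀ e))ₑ`. If `‖A a‖ ≤ λ‖a‖` on `U`, and `W ⊆ ℓ²(V)` is a
subspace on which `‖x‖² ≤ κ‖A†x‖²` modulo `ker A†` with `λ²κ < 1`, then `A†(W)` meets `U`
trivially, and counting dimensions gives `dim U ≤ dim ker A + codim W`.

Such a `W` comes from the components of the graph: each carries a closed walk through all its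
vertices using every edge at most twice. Cut each walk into blocks of `ℓ ≈ λ⁻¹` consecutive
positions and let `W` consist of the `x` whose block averages agree along every walk. Subtracting
this common average (a locally constant function, so in `ker A†`), a discrete Poincaré inequality
on each block gives `‖x‖² ≤ (ℓ²/3)‖A†x‖²`. There are at most `2|E|/ℓ ≤ 2|E|λ` constraints, and
`deg(X) ≥ 1` as soon as there is an edge.
-/

open Finset Module

section Adjoint

variable {H K : Type*} [NormedAddCommGroup H] [InnerProductSpace ℝ H] [FiniteDimensional ℝ H]
  [NormedAddCommGroup K] [InnerProductSpace ℝ K] [FiniteDimensional ℝ K]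

theorem disjoint_map_adjoint {A : H →ₗ[ℝ] K} {lam κ : ℝ} (hlam : lam ^ 2 * κ < 1)
    {U : Submodule ℝ H} (hU : ∀ a ∈ U, ‖A a‖ ≤ lam * ‖a‖) {W : Submodule ℝ K}
    (hW : ∀ x ∈ W, ∃ y, A.adjoint y = A.adjoint x ∧ ‖y‖ ^ 2 ≤ κ * ‖A.adjoint x‖ ^ 2) :
    Disjoint U (W.map A.adjoint) := by
  refine Submodule.disjoint_def.2 fun w hwU hwW => ?_
  obtain ⟨x, hxW, rfl⟩ := Submodule.mem_map.1 hwW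
  obtain ⟨y, hy, hyx⟩ := hW x hxW
  set w := A.adjoint x
  have hinner : ‖w‖ ^ 2 ≤ ‖A w‖ * ‖y‖ := by
    rw [← real_inner_self_eq_norm_sq]
    nth_rewrite 2 [← hy]
    rw [LinearMap.adjoint_inner_right]
    exact real_inner_le_norm _ _
  have hAw : ‖A w‖ ^ 2 ≤ lam ^ 2 * ‖w‖ ^ 2 := by
    rw [← mul_pow]
    exact pow_le_pow_left₀ (norm_nonneg _) (hU w hwU) 2
  have : ‖w‖ ^ 4 ≤ lam ^ 2 * κ * ‖w‖ ^ 4 :=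
    calc ‖w‖ ^ 4 = (‖w‖ ^ 2) ^ 2 := by ring
      _ ≤ (‖A w‖ * ‖y‖) ^ 2 := pow_le_pow_left₀ (by positivity) hinner 2
      _ = ‖A w‖ ^ 2 * ‖y‖ ^ 2 := by ring
      _ ≤ lam ^ 2 * ‖w‖ ^ 2 * (κ * ‖w‖ ^ 2) := mul_le_mul hAw hyx (by positivity) (by positivity)
      _ = lam ^ 2 * κ * ‖w‖ ^ 4 := by ring
  have : ‖w‖ ^ 4 = 0 := by nlinarith [pow_nonneg (norm_nonneg w) 4]
  simpa using this

theorem finrank_add_finrank_le_of_adjoint {A : H →ₗ[ℝ] K} {lam κ : ℝ} (hlam : lam ^ 2 * κ < 1)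
    {U : Submodule ℝ H} (hU : ∀ a ∈ U, ‖A a‖ ≤ lam * ‖a‖) {W : Submodule ℝ K}
    (hW : ∀ x ∈ W, ∃ y, A.adjoint y = A.adjoint x ∧ ‖y‖ ^ 2 ≤ κ * ‖A.adjoint x‖ ^ 2) :
    finrank ℝ U + finrank ℝ W ≤ finrank ℝ A.ker + finrank ℝ K := by
  have hdisj := Submodule.finrank_add_finrank_le_of_disjoint (disjoint_map_adjoint hlam hU hW)
  have hrank := (A.adjoint.domRestrict W).finrank_range_add_finrank_ker
  rw [LinearMap.range_domRestrict] at hrank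
  have hker : finrank ℝ (A.adjoint.domRestrict W).ker ≤ finrank ℝ A.adjoint.ker := by
    rw [LinearMap.ker_domRestrict, ← Submodule.finrank_map_subtype_eq]
    exact Submodule.finrank_mono (Submodule.map_comap_le _ _)
  have hA := A.finrank_range_add_finrank_ker
  have hA' := A.adjoint.finrank_range_add_finrank_ker
  have := LinearMap.finrank_range_adjoint A
  omega

end Adjoint

section SpectralDensity

variable {H K : Type*} [NormedAddCommGroup H] [InnerProductSpace ℝ H] [FiniteDimensional ℝ H]
  [NormedAddCommGroup K] [InnerProductSpace ℝ K] (f : H →ₗ[ℝ] K) (lam : ℝ)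

theorem bddAbove_sdf_set : BddAbove {n : ℕ | ∃ U : Submodule ℝ H, finrank ℝ U = n ∧
    ∀ v ∈ U, ‖f v‖ ≤ lam * ‖v‖} :=
  ⟨finrank ℝ H, by rintro _ ⟨U, rfl, -⟩; exact Submodule.finrank_le U⟩

theorem exists_finrank_eq_sdf :
    ∃ U : Submodule ℝ H, finrank ℝ U = sdf f lam ∧ ∀ v ∈ U, ‖f v‖ ≤ lam * ‖v‖ :=
  Nat.sSup_mem (s := {n | ∃ U : Submodule ℝ H, finrank ℝ U = n ∧ ∀ v ∈ U, ‖f v‖ ≤ lam * ‖v‖})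
    ⟨0, ⊥, finrank_bot ℝ H, by simp⟩ (bddAbove_sdf_set f lam)

theorem sdf_le_finrank : sdf f lam ≤ finrank ℝ H := by
  obtain ⟨U, hU, -⟩ := exists_finrank_eq_sdf f lam
  exact hU ▸ Submodule.finrank_le U

theorem finrank_ker_le_sdf_zero : finrank ℝ f.ker ≤ sdf f 0 :=
  le_csSup (bddAbove_sdf_set f 0) ⟨f.ker, rfl, fun v hv => by simp [LinearMap.mem_ker.1 hv]⟩

end SpectralDensity

section Poincare

theorem sq_sub_le_mul_sum_sq_sub (z : ℕ → ℝ) {i j : ℕ} (hij : i ≤ j) :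
    (z j - z i) ^ 2 ≤ (j - i : ℕ) * ∑ t ∈ Ico i j, (z (t + 1) - z t) ^ 2 := by
  rw [← Finset.sum_Ico_sub z hij, ← Nat.card_Ico]
  exact sq_sum_le_card_mul_sum_sq

theorem sum_range_natCast (n : ℕ) : ∑ i ∈ range n, (i : ℝ) = n * (n - 1) / 2 := by
  induction n with
  | zero => simp
  | succ n ih => rw [sum_range_succ, ih]; push_cast; ring

theorem sum_sum_abs_sub_le (n : ℕ) :
    ∑ i ∈ range n, ∑ j ∈ range n, |(i : ℝ) - j| ≤ n ^ 3 / 3 := by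
  induction n with
  | zero => simp
  | succ n ih =>
    have hrow : ∑ j ∈ range n, |(n : ℝ) - j| = n * (n + 1) / 2 := by
      rw [sum_congr rfl fun j hj => abs_of_nonneg (sub_nonneg.2 (Nat.cast_le.2
        (mem_range.1 hj).le)), sum_sub_distrib, sum_range_natCast]
      simp only [sum_const, card_range, nsmul_eq_mul]
      ring
    have hcol : ∑ i ∈ range n, |(i : ℝ) - n| = n * (n + 1) / 2 := by
      simpa only [abs_sub_comm] using hrow
    simp only [sum_range_succ, sum_add_distrib, hrow, hcol, sub_self, abs_zero, add_zero]
    push_cast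
    nlinarith [ih]

theorem sum_Ico_sq_le_of_sum_eq_zero (z : ℕ → ℝ) {a b : ℕ} (hz : ∑ t ∈ Ico a b, z t = 0) :
    ∑ t ∈ Ico a b, z t ^ 2 ≤
      ((b - a : ℕ) : ℝ) ^ 2 / 6 * ∑ t ∈ Ico a (b - 1), (z (t + 1) - z t) ^ 2 := by
  set D := ∑ t ∈ Ico a (b - 1), (z (t + 1) - z t) ^ 2
  set n := b - a
  have hD : 0 ≤ D := sum_nonneg fun t _ => sq_nonneg _
  rcases Nat.eq_zero_or_pos n with hn | hn
  · rw [Ico_eq_empty (by omega), sum_empty]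
    positivity
  have hpair : ∀ i ∈ Ico a b, ∀ j ∈ Ico a b, (z i - z j) ^ 2 ≤ |(i : ℝ) - j| * D := by
    have key : ∀ i j, a ≤ i → i ≤ j → j < b → (z j - z i) ^ 2 ≤ |(i : ℝ) - j| * D := by
      intro i j hi hij hj
      rw [abs_sub_comm, abs_of_nonneg (by simpa using hij), ← Nat.cast_sub hij]
      refine (sq_sub_le_mul_sum_sq_sub z hij).trans (mul_le_mul_of_nonneg_left ?_ (by positivity))
      exact sum_le_sum_of_subset_of_nonneg (Ico_subset_Ico hi (by omega))
        fun t _ _ => sq_nonneg _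
    intro i hi j hj
    rw [mem_Ico] at hi hj
    rcases le_total i j with h | h
    · rw [← neg_sub, neg_sq]; exact key i j hi.1 h hj.2
    · rw [abs_sub_comm]; exact key j i hj.1 h hi.2
  have hexpand : ∑ i ∈ Ico a b, ∑ j ∈ Ico a b, (z i - z j) ^ 2
      = 2 * n * ∑ t ∈ Ico a b, z t ^ 2 := by
    simp only [sub_sq, sum_add_distrib, sum_sub_distrib, ← mul_sum, ← sum_mul, hz, sum_const,
      Nat.card_Ico, nsmul_eq_mul]
    ring
  have habs : ∑ i ∈ Ico a b, ∑ j ∈ Ico a b, |(i : ℝ) - j| ≤ n ^ 3 / 3 := by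
    simpa [sum_Ico_eq_sum_range] using sum_sum_abs_sub_le n
  have : 2 * n * ∑ t ∈ Ico a b, z t ^ 2 ≤ n ^ 3 / 3 * D := by
    calc 2 * n * ∑ t ∈ Ico a b, z t ^ 2
        = ∑ i ∈ Ico a b, ∑ j ∈ Ico a b, (z i - z j) ^ 2 := hexpand.symm
      _ ≤ ∑ i ∈ Ico a b, ∑ j ∈ Ico a b, |(i : ℝ) - j| * D :=
        sum_le_sum fun i hi => sum_le_sum fun j hj => hpair i hi j hj
      _ = (∑ i ∈ Ico a b, ∑ j ∈ Ico a b, |(i : ℝ) - j|) * D := by simp only [sum_mul]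
      _ ≤ n ^ 3 / 3 * D := mul_le_mul_of_nonneg_right habs hD
  have hn' : (0 : ℝ) < n := by exact_mod_cast hn
  nlinarith

def block (n ℓ j : ℕ) : Finset ℕ := (range n).filter fun t => t / ℓ = j

theorem block_eq_Ico {n ℓ : ℕ} (hℓ : 0 < ℓ) (j : ℕ) :
    block n ℓ j = Ico (j * ℓ) (min ((j + 1) * ℓ) n) := by
  ext t
  simp only [block, mem_filter, mem_range, mem_Ico, lt_min_iff, Nat.div_eq_iff hℓ]
  constructor
  · rintro ⟨ht, h1, h2⟩; exact ⟨h1, by rw [add_mul]; omega, ht⟩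
  · rintro ⟨h1, h2, ht⟩; exact ⟨ht, h1, by rw [add_mul] at h2; omega⟩

theorem sum_sq_le_of_sum_block_eq_zero (z : ℕ → ℝ) {n ℓ : ℕ} (hℓ : 0 < ℓ)
    (hz : ∀ j, ∑ t ∈ block n ℓ j, z t = 0) :
    ∑ t ∈ range n, z t ^ 2 ≤ ℓ ^ 2 / 6 * ∑ t ∈ range (n - 1), (z (t + 1) - z t) ^ 2 := by
  have hmaps : ∀ m ≤ n, ∀ t ∈ range m, t / ℓ ∈ range n := fun m hm t ht =>
    mem_range.2 ((Nat.div_le_self t ℓ).trans_lt ((mem_range.1 ht).trans_le hm))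
  rw [← sum_fiberwise_of_maps_to (hmaps n le_rfl),
    ← sum_fiberwise_of_maps_to (hmaps (n - 1) (by omega)), mul_sum]
  refine sum_le_sum fun j _ => ?_
  have hblock := sum_Ico_sq_le_of_sum_eq_zero z (block_eq_Ico hℓ j ▸ hz j)
  rw [← block_eq_Ico hℓ j] at hblock
  refine hblock.trans (mul_le_mul ?_ ?_ (sum_nonneg fun _ _ => sq_nonneg _) (by positivity))
  · gcongr
    have : min ((j + 1) * ℓ) n - j * ℓ ≤ ℓ := by rw [add_mul, one_mul]; omega
    exact_mod_cast this
  · refine sum_le_sum_of_subset_of_nonneg (fun t ht => ?_) fun _ _ _ => sq_nonneg _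
    rw [mem_Ico] at ht
    simp only [mem_filter, mem_range]
    exact ⟨by omega, Nat.div_eq_of_lt_le ht.1 (by omega)⟩

theorem sum_block_sub_eq_zero_of_balanced (z : ℕ → ℝ) {n ℓ j : ℕ}
    (hbal : (#(block n ℓ 0) : ℝ) * ∑ t ∈ block n ℓ j, z t =
      #(block n ℓ j) * ∑ t ∈ block n ℓ 0, z t) :
    ∑ t ∈ block n ℓ j, (z t - (∑ t ∈ block n ℓ 0, z t) / #(block n ℓ 0)) = 0 := by
  rw [sum_sub_distrib, sum_const, nsmul_eq_mul]
  rcases Nat.eq_zero_or_pos n with rfl | hn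
  · simp [block]
  have h0 : (#(block n ℓ 0) : ℝ) ≠ 0 := by
    exact_mod_cast (card_pos.2 ⟨0, by simp [block, hn, Nat.eq_zero_or_pos]⟩).ne'
  field_simp
  linarith

theorem sum_sq_sub_le_of_balanced (z : ℕ → ℝ) {n ℓ : ℕ} (hℓ : 0 < ℓ)
    (hbal : ∀ j, (#(block n ℓ 0) : ℝ) * ∑ t ∈ block n ℓ j, z t =
      #(block n ℓ j) * ∑ t ∈ block n ℓ 0, z t) :
    ∑ t ∈ range n, (z t - (∑ t ∈ block n ℓ 0, z t) / #(block n ℓ 0)) ^ 2 ≤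
      ℓ ^ 2 / 6 * ∑ t ∈ range (n - 1), (z (t + 1) - z t) ^ 2 := by
  simpa only [sub_sub_sub_cancel_right] using sum_sq_le_of_sum_block_eq_zero _ hℓ
    fun j => sum_block_sub_eq_zero_of_balanced z (hbal j)

end Poincare

theorem sum_le_sum_sum_of_forall_exists {ι α : Type*} [Fintype α] [Fintype ι] {g : α → ℝ}
    (hg : ∀ a, 0 ≤ g a) (s : ι → ℕ → α) (n : ι → ℕ) (hs : ∀ a, ∃ c, ∃ t < n c, s c t = a) :
    ∑ a, g a ≤ ∑ c, ∑ t ∈ range (n c), g (s c t) := by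
  classical
  have hsub : univ ⊆ (univ.sigma fun c => range (n c)).image fun p => s p.1 p.2 := fun a _ => by
    obtain ⟨c, t, ht, rfl⟩ := hs a
    exact mem_image.2 ⟨⟨c, t⟩, by simpa using ht, rfl⟩
  calc ∑ a, g a ≤ ∑ a ∈ (univ.sigma fun c => range (n c)).image fun p => s p.1 p.2, g a :=
        sum_le_sum_of_subset_of_nonneg hsub fun a _ _ => hg a
    _ ≤ ∑ p ∈ univ.sigma fun c => range (n c), g (s p.1 p.2) :=
        sum_image_le_of_nonneg fun a _ => hg a
    _ = ∑ c, ∑ t ∈ range (n c), g (s c t) := sum_sigma _ _ _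

theorem sum_sum_map_le_of_count_le {ι α : Type*} [Fintype ι] [DecidableEq α] (l : ι → List α)
    {S : Finset α} {f : α → ℝ} (hf : ∀ s ∈ S, 0 ≤ f s) (hS : ∀ c, ∀ s ∈ l c, s ∈ S)
    (hdisj : Pairwise fun c c' => (l c).Disjoint (l c')) {k : ℕ} (hk : ∀ c s, (l c).count s ≤ k) :
    ∑ c, ((l c).map f).sum ≤ k * ∑ s ∈ S, f s := by
  have hsub : univ.biUnion (fun c => (l c).toFinset) ⊆ S := by
    simpa [biUnion_subset, subset_iff] using fun s c hs => hS c s hs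
  have hpd : ((univ : Finset ι) : Set ι).PairwiseDisjoint fun c => (l c).toFinset := by
    intro c _ c' _ hcc'
    simpa [Function.onFun, List.disjoint_toFinset_iff_disjoint] using hdisj hcc'
  calc ∑ c, ((l c).map f).sum = ∑ c, ∑ s ∈ (l c).toFinset, (l c).count s • f s := by
        simp only [sum_list_map_count]
    _ ≤ ∑ c, ∑ s ∈ (l c).toFinset, k * f s := by
        gcongr with c _ s hs
        rw [nsmul_eq_mul]
        exact mul_le_mul_of_nonneg_right (by exact_mod_cast hk c s)
          (hf s (hS c s (List.mem_toFinset.1 hs)))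
    _ = k * ∑ s ∈ univ.biUnion (fun c => (l c).toFinset), f s := by
        rw [sum_biUnion hpd, mul_sum]; simp only [mul_sum]
    _ ≤ k * ∑ s ∈ S, f s := by
        gcongr ?_ * ?_
        exact sum_le_sum_of_subset_of_nonneg hsub fun s hs _ => hf s hs

namespace SimpleGraph

variable {G : SimpleGraph V}

theorem Walk.sum_range_length_getVert {M : Type*} [AddCommMonoid M] (f : Sym2 V → M) {u v : V}
    (p : G.Walk u v) :
    ∑ t ∈ range p.length, f s(p.getVert t, p.getVert (t + 1)) = (p.edges.map f).sum := by
  induction p with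
  | nil => simp
  | cons h p ih =>
    simp only [length_cons, sum_range_succ', getVert_cons_succ, getVert_zero, ih, edges_cons,
      List.map_cons, List.sum_cons]
    exact add_comm _ _

theorem Walk.connectedComponentMk_eq_of_mem_support {u v w : V} (p : G.Walk u v)
    (hw : w ∈ p.support) : G.connectedComponentMk w = G.connectedComponentMk u := by
  classical
  exact (ConnectedComponent.eq.2 ⟨p.takeUntil w hw⟩).symm

variable [DecidableEq V]

theorem Walk.exists_detour {u a b : V} (p : G.Walk u u) (ha : a ∈ p.support) (hab : G.Adj a b)
    (hb : b ∉ p.support) (hp : ∀ s, p.edges.count s ≤ 2) :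
    ∃ q : G.Walk u u, p.support ⊆ q.support ∧ b ∈ q.support ∧ ∀ s, q.edges.count s ≤ 2 := by
  set T := p.takeUntil a ha
  set D := p.dropUntil a ha
  have hspec := p.take_spec ha
  refine ⟨T.append (cons hab (cons hab.symm D)), fun v hv => ?_, by simp, fun s => ?_⟩
  · rw [← hspec, mem_support_append_iff] at hv
    rw [mem_support_append_iff, support_cons, support_cons]
    rcases hv with hv | hv
    · exact Or.inl hv
    · exact Or.inr (List.mem_cons_of_mem _ (List.mem_cons_of_mem _ hv))
  · have hcount : p.edges.count s = T.edges.count s + D.edges.count s := by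
      rw [← hspec, edges_append, List.count_append]
    have hnew : p.edges.count s(a, b) = 0 :=
      List.count_eq_zero.2 fun h => hb (p.snd_mem_support_of_mem_edges h)
    rw [edges_append, edges_cons, edges_cons, List.count_append, List.count_cons,
      List.count_cons, Sym2.eq_swap]
    have := hp s
    by_cases hs : s = s(a, b)
    · subst hs; simp only [BEq.rfl, ↓reduceIte]; omega
    · simp only [beq_iff_eq, Ne.symm hs, ↓reduceIte, add_zero]; omega

theorem Walk.exists_extend {u : V} (p : G.Walk u u) (hp : ∀ s, p.edges.count s ≤ 2) {v w : V}
    (r : G.Walk v w) (hv : v ∈ p.support) :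
    ∃ q : G.Walk u u, p.support ⊆ q.support ∧ w ∈ q.support ∧ ∀ s, q.edges.count s ≤ 2 := by
  induction r generalizing p with
  | nil => exact ⟨p, fun _ h => h, hv, hp⟩
  | @cons v v' w h r ih =>
    by_cases hv' : v' ∈ p.support
    · exact ih p hp hv'
    · obtain ⟨q₁, hsub₁, hmem₁, hq₁⟩ := p.exists_detour hv h hv' hp
      obtain ⟨q, hsub, hmem, hq⟩ := ih q₁ hq₁ hmem₁
      exact ⟨q, fun _ h => hsub (hsub₁ h), hmem, hq⟩

theorem exists_walk_mem_support_of_reachable [Fintype V] (G : SimpleGraph V) (u : V) :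
    ∃ p : G.Walk u u, (∀ v, G.Reachable u v → v ∈ p.support) ∧ ∀ s, p.edges.count s ≤ 2 := by
  suffices ∀ S : Finset V, ∃ p : G.Walk u u,
      (∀ v ∈ S, G.Reachable u v → v ∈ p.support) ∧ ∀ s, p.edges.count s ≤ 2 by
    obtain ⟨p, hS, hp⟩ := this univ
    exact ⟨p, fun v => hS v (mem_univ v), hp⟩
  intro S
  induction S using Finset.induction with
  | empty => exact ⟨.nil, by simp, by simp⟩
  | @insert v S _ ih =>
    obtain ⟨p, hS, hp⟩ := ih
    by_cases hv : G.Reachable u v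
    · obtain ⟨q, hsub, hvq, hq⟩ := p.exists_extend hp hv.some p.start_mem_support
      refine ⟨q, fun w hw hw' => ?_, hq⟩
      rcases mem_insert.1 hw with rfl | hw
      · exact hvq
      · exact hsub (hS w hw hw')
    · exact ⟨p, fun w hw hw' => (mem_insert.1 hw).elim (fun h => absurd (h ▸ hw') hv)
        (fun h => hS w h hw'), hp⟩

namespace ConnectedComponent

variable [Fintype V]

noncomputable def coverWalk (c : G.ConnectedComponent) : G.Walk c.out c.out :=
  (G.exists_walk_mem_support_of_reachable c.out).choose

theorem mem_support_coverWalk_iff {c : G.ConnectedComponent} {v : V} :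
    v ∈ c.coverWalk.support ↔ G.connectedComponentMk v = c := by
  refine ⟨fun h => (c.coverWalk.connectedComponentMk_eq_of_mem_support h).trans c.out_eq,
    fun h => (G.exists_walk_mem_support_of_reachable c.out).choose_spec.1 v ?_⟩
  exact ConnectedComponent.exact (c.out_eq.trans h.symm)

theorem count_edges_coverWalk_le (c : G.ConnectedComponent) (s : Sym2 V) :
    c.coverWalk.edges.count s ≤ 2 :=
  (G.exists_walk_mem_support_of_reachable c.out).choose_spec.2 s

theorem sum_coverWalk_edges_le [Fintype G.ConnectedComponent] {S : Finset (Sym2 V)}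
    (hS : ∀ s ∈ G.edgeSet, s ∈ S) {f : Sym2 V → ℝ} (hf : ∀ s ∈ S, 0 ≤ f s) :
    ∑ c : G.ConnectedComponent, (c.coverWalk.edges.map f).sum ≤ 2 * ∑ s ∈ S, f s := by
  refine sum_sum_map_le_of_count_le _ hf
    (fun c s hs => hS s (c.coverWalk.edges_subset_edgeSet hs))
    (fun c c' hcc' s hs hs' => hcc' ?_) count_edges_coverWalk_le
  rw [← mem_support_coverWalk_iff.1 (Walk.mem_support_of_mem_edges hs s.out_fst_mem),
    ← mem_support_coverWalk_iff.1 (Walk.mem_support_of_mem_edges hs' s.out_fst_mem)]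

end ConnectedComponent

end SimpleGraph

section Blocks

variable {ι : Type*} (s : ι → ℕ → V) (L : ι → ℕ) (ℓ : ℕ)

/-- Its kernel consists of the `x` such that, along each sequence `s c` of positions
`0, …, L c`, every block of `ℓ` consecutive positions has the same average of `x` as the first. -/
noncomputable def blockImbalance :
    EuclideanSpace ℝ V →ₗ[ℝ] ((c : ι) × Fin (L c / ℓ)) → ℝ where
  toFun x i := #(block (L i.1 + 1) ℓ 0) * ∑ t ∈ block (L i.1 + 1) ℓ (i.2 + 1), x (s i.1 t)
    - #(block (L i.1 + 1) ℓ (i.2 + 1)) * ∑ t ∈ block (L i.1 + 1) ℓ 0, x (s i.1 t)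
  map_add' x y := by
    ext i
    simp only [PiLp.add_apply, sum_add_distrib, Pi.add_apply]
    ring
  map_smul' r x := by
    ext i
    simp only [PiLp.smul_apply, smul_eq_mul, ← mul_sum, RingHom.id_apply, Pi.smul_apply]
    ring

theorem card_le_finrank_ker_blockImbalance_add [Fintype V] [Fintype ι] :
    Fintype.card V ≤ finrank ℝ (blockImbalance s L ℓ).ker + ∑ c, L c / ℓ := by
  have h := (blockImbalance s L ℓ).finrank_range_add_finrank_ker
  have hr := Submodule.finrank_le (blockImbalance s L ℓ).range
  simp only [finrank_euclideanSpace, Module.finrank_fintype_fun_eq_card, Fintype.card_sigma,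
    Fintype.card_fin] at h hr
  omega

theorem balanced_of_mem_ker_blockImbalance {x : EuclideanSpace ℝ V}
    (hx : x ∈ (blockImbalance s L ℓ).ker) (c : ι) (j : ℕ) :
    (#(block (L c + 1) ℓ 0) : ℝ) * ∑ t ∈ block (L c + 1) ℓ j, x (s c t) =
      #(block (L c + 1) ℓ j) * ∑ t ∈ block (L c + 1) ℓ 0, x (s c t) := by
  rcases j with _ | j
  · ring
  by_cases hj : j < L c / ℓ
  · exact sub_eq_zero.1 (congr_fun (LinearMap.mem_ker.1 hx) ⟨c, j, hj⟩)
  · have : block (L c + 1) ℓ (j + 1) = ∅ := by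
      refine filter_eq_empty_iff.2 fun t ht h => hj ?_
      have := Nat.div_le_div_right (c := ℓ) (Nat.lt_succ_iff.1 (mem_range.1 ht))
      omega
    simp [this]

end Blocks

theorem reachable_supportGraph (v0 v1 : E → V) (e : E) :
    (supportGraph v0 v1).Reachable (v0 e) (v1 e) := by
  by_cases h : v0 e = v1 e
  · rw [h]
  · exact SimpleGraph.Adj.reachable ⟨h, e, Or.inl ⟨rfl, rfl⟩⟩

section Graph

-- for `Fintype (supportGraph v0 v1).ConnectedComponent`
open scoped Classical

variable [Fintype V] [Fintype E] [DecidableEq V] (v0 v1 : E → V)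

theorem c1_adjoint_apply (x : EuclideanSpace ℝ V) (e : E) :
    (c1 v0 v1).adjoint x e = x (v1 e) - x (v0 e) := by
  have hsingle : c1 v0 v1 (EuclideanSpace.single e 1) =
      EuclideanSpace.single (v1 e) 1 - EuclideanSpace.single (v0 e) 1 := by
    ext v
    simp [c1, PiLp.single_apply, eq_comm]
  have h := LinearMap.adjoint_inner_right (c1 v0 v1) (EuclideanSpace.single e 1) x
  simpa [EuclideanSpace.inner_single_left, hsingle, inner_sub_left] using h

theorem norm_c1_adjoint_sq (x : EuclideanSpace ℝ V) :
    ‖(c1 v0 v1).adjoint x‖ ^ 2 = ∑ e, (x (v1 e) - x (v0 e)) ^ 2 := by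
  simp [EuclideanSpace.real_norm_sq_eq, c1_adjoint_apply]

theorem sum_coverWalk_supportGraph_le {f : Sym2 V → ℝ} (hf : ∀ s, 0 ≤ f s) :
    ∑ c : (supportGraph v0 v1).ConnectedComponent, (c.coverWalk.edges.map f).sum ≤
      2 * ∑ e, f s(v0 e, v1 e) := by
  have hS : ∀ s ∈ (supportGraph v0 v1).edgeSet, s ∈ univ.image fun e => s(v0 e, v1 e) := by
    intro s hs
    induction s using Sym2.ind with
    | _ a b =>
      obtain ⟨-, e, he | he⟩ := hs
      · exact mem_image.2 ⟨e, mem_univ e, by rw [he.1, he.2]⟩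
      · exact mem_image.2 ⟨e, mem_univ e, by rw [he.1, he.2, Sym2.eq_swap]⟩
  calc _ ≤ 2 * ∑ s ∈ univ.image fun e => s(v0 e, v1 e), f s :=
        SimpleGraph.ConnectedComponent.sum_coverWalk_edges_le hS fun s _ => hf s
    _ ≤ 2 * ∑ e, f s(v0 e, v1 e) := by
        gcongr ?_ * ?_
        exact sum_image_le_of_nonneg fun s _ => hf s

theorem sum_length_coverWalk_le :
    (∑ c : (supportGraph v0 v1).ConnectedComponent, c.coverWalk.length : ℝ) ≤
      2 * Fintype.card E := by
  simpa using sum_coverWalk_supportGraph_le v0 v1 (f := fun _ => 1) fun _ => zero_le_one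

theorem sum_coverWalk_getVert_sub_sq_le (x : EuclideanSpace ℝ V) :
    ∑ c : (supportGraph v0 v1).ConnectedComponent, ∑ t ∈ range c.coverWalk.length,
      (x (c.coverWalk.getVert (t + 1)) - x (c.coverWalk.getVert t)) ^ 2 ≤
      2 * ‖(c1 v0 v1).adjoint x‖ ^ 2 := by
  let f : Sym2 V → ℝ := Sym2.lift ⟨fun a b => (x b - x a) ^ 2, fun a b => by ring⟩
  have h := sum_coverWalk_supportGraph_le v0 v1 (f := f) fun s => s.ind fun a b => sq_nonneg _
  simp only [← SimpleGraph.Walk.sum_range_length_getVert, f, Sym2.lift_mk] at h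
  rwa [norm_c1_adjoint_sq]

theorem exists_adjoint_eq_norm_sq_le {ℓ : ℕ} (hℓ : 0 < ℓ) {x : EuclideanSpace ℝ V}
    (hx : x ∈ (blockImbalance (fun (c : (supportGraph v0 v1).ConnectedComponent) =>
      c.coverWalk.getVert) (fun c => c.coverWalk.length) ℓ).ker) :
    ∃ y, (c1 v0 v1).adjoint y = (c1 v0 v1).adjoint x ∧
      ‖y‖ ^ 2 ≤ ℓ ^ 2 / 3 * ‖(c1 v0 v1).adjoint x‖ ^ 2 := by
  let m : (supportGraph v0 v1).ConnectedComponent → ℝ := fun c =>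
    (∑ t ∈ block (c.coverWalk.length + 1) ℓ 0, x (c.coverWalk.getVert t)) /
      #(block (c.coverWalk.length + 1) ℓ 0)
  let k : EuclideanSpace ℝ V :=
    WithLp.toLp 2 fun v => m ((supportGraph v0 v1).connectedComponentMk v)
  have hk : (c1 v0 v1).adjoint k = 0 := by
    ext e
    simp [c1_adjoint_apply, k,
      SimpleGraph.ConnectedComponent.eq.2 (reachable_supportGraph v0 v1 e)]
  refine ⟨x - k, by rw [map_sub, hk, sub_zero], ?_⟩
  have hcover : ∀ v, ∃ c : (supportGraph v0 v1).ConnectedComponent,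
      ∃ t < c.coverWalk.length + 1, c.coverWalk.getVert t = v := fun v => by
    obtain ⟨t, ht, htl⟩ := SimpleGraph.Walk.mem_support_iff_exists_getVert.1
      (SimpleGraph.ConnectedComponent.mem_support_coverWalk_iff
        (c := (supportGraph v0 v1).connectedComponentMk v) |>.2 rfl)
    exact ⟨_, t, Nat.lt_succ_of_le htl, ht⟩
  have hcomp : ∀ (c : (supportGraph v0 v1).ConnectedComponent) t,
      (supportGraph v0 v1).connectedComponentMk (c.coverWalk.getVert t) = c :=
    fun c t => SimpleGraph.ConnectedComponent.mem_support_coverWalk_iff.1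
      (c.coverWalk.getVert_mem_support t)
  calc ‖x - k‖ ^ 2 = ∑ v, (x v - k v) ^ 2 := by simp [EuclideanSpace.real_norm_sq_eq]
    _ ≤ ∑ c : (supportGraph v0 v1).ConnectedComponent, ∑ t ∈ range (c.coverWalk.length + 1),
          (x (c.coverWalk.getVert t) - k (c.coverWalk.getVert t)) ^ 2 :=
        sum_le_sum_sum_of_forall_exists (fun v => sq_nonneg (x v - k v)) _ _ hcover
    _ = ∑ c : (supportGraph v0 v1).ConnectedComponent, ∑ t ∈ range (c.coverWalk.length + 1),
          (x (c.coverWalk.getVert t) - m c) ^ 2 := by simp [k, hcomp]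
    _ ≤ ∑ c : (supportGraph v0 v1).ConnectedComponent,
          ℓ ^ 2 / 6 * ∑ t ∈ range c.coverWalk.length,
            (x (c.coverWalk.getVert (t + 1)) - x (c.coverWalk.getVert t)) ^ 2 := by
        gcongr with c
        simpa using sum_sq_sub_le_of_balanced (fun t => x (c.coverWalk.getVert t)) hℓ
          (balanced_of_mem_ker_blockImbalance _ _ ℓ hx c)
    _ ≤ ℓ ^ 2 / 6 * (2 * ‖(c1 v0 v1).adjoint x‖ ^ 2) := by
        rw [← mul_sum]
        gcongr
        exact sum_coverWalk_getVert_sub_sq_le v0 v1 x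
    _ = ℓ ^ 2 / 3 * ‖(c1 v0 v1).adjoint x‖ ^ 2 := by ring

theorem finrank_le_finrank_ker_c1_add {lam : ℝ} {ℓ : ℕ} (hℓ : 0 < ℓ)
    (hlam : lam ^ 2 * (ℓ ^ 2 / 3) < 1) {U : Submodule ℝ (EuclideanSpace ℝ E)}
    (hU : ∀ a ∈ U, ‖c1 v0 v1 a‖ ≤ lam * ‖a‖) :
    finrank ℝ U ≤ finrank ℝ (c1 v0 v1).ker +
      ∑ c : (supportGraph v0 v1).ConnectedComponent, c.coverWalk.length / ℓ := by
  have h := finrank_add_finrank_le_of_adjoint hlam hU fun x hx =>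
    exists_adjoint_eq_norm_sq_le v0 v1 hℓ hx
  have hW := card_le_finrank_ker_blockImbalance_add
    (fun (c : (supportGraph v0 v1).ConnectedComponent) => c.coverWalk.getVert)
    (fun c => c.coverWalk.length) ℓ
  rw [finrank_euclideanSpace] at h
  omega

theorem sdf_c1_le_sdf_c1_zero_add {lam : ℝ} {ℓ : ℕ} (hℓ : 0 < ℓ)
    (hlam : lam ^ 2 * (ℓ ^ 2 / 3) < 1) :
    (sdf (c1 v0 v1) lam : ℝ) ≤ sdf (c1 v0 v1) 0 + 2 * Fintype.card E / ℓ := by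
  obtain ⟨U, hUdim, hU⟩ := exists_finrank_eq_sdf (c1 v0 v1) lam
  have hker : (finrank ℝ (c1 v0 v1).ker : ℝ) ≤ sdf (c1 v0 v1) 0 := by
    exact_mod_cast finrank_ker_le_sdf_zero (c1 v0 v1)
  have hU : (finrank ℝ U : ℝ) ≤ finrank ℝ (c1 v0 v1).ker +
      ((∑ c : (supportGraph v0 v1).ConnectedComponent, c.coverWalk.length / ℓ : ℕ) : ℝ) := by
    exact_mod_cast finrank_le_finrank_ker_c1_add v0 v1 hℓ hlam hU
  have hblocks :
      ((∑ c : (supportGraph v0 v1).ConnectedComponent, c.coverWalk.length / ℓ : ℕ) : ℝ) ≤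
        2 * Fintype.card E / ℓ :=
    calc _ ≤ ∑ c : (supportGraph v0 v1).ConnectedComponent, (c.coverWalk.length : ℝ) / ℓ := by
          push_cast
          exact sum_le_sum fun c _ => Nat.cast_div_le
      _ ≤ 2 * Fintype.card E / ℓ := by
          rw [← sum_div]
          gcongr
          exact sum_length_coverWalk_le v0 v1
  rw [← hUdim]
  linarith

theorem sdf_c1_sub_sdf_c1_zero_le {lam : ℝ} (h0 : 0 ≤ lam) :
    (sdf (c1 v0 v1) lam : ℝ) - sdf (c1 v0 v1) 0 ≤ 2 * Fintype.card E * lam := by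
  rcases h0.eq_or_lt with rfl | hpos
  · simp
  have hsdf0 : (0 : ℝ) ≤ sdf (c1 v0 v1) 0 := Nat.cast_nonneg _
  rcases le_or_gt (1 / 2) lam with hbig | hsmall
  · have : (sdf (c1 v0 v1) lam : ℝ) ≤ Fintype.card E := by
      exact_mod_cast finrank_euclideanSpace (𝕜 := ℝ) (ι := E) ▸ sdf_le_finrank (c1 v0 v1) lam
    nlinarith [(Fintype.card E).cast_nonneg (α := ℝ)]
  -- `ℓ = ⌈λ⁻¹⌉` makes `2|E|/ℓ ≤ 2|E|λ`, while `λℓ < 1 + λ < 3/2 < √3`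
  set ℓ := ⌈lam⁻¹⌉₊
  have hℓ : 0 < ℓ := Nat.ceil_pos.2 (inv_pos.2 hpos)
  have hge : lam⁻¹ ≤ ℓ := Nat.le_ceil _
  have hlt : (ℓ : ℝ) < lam⁻¹ + 1 := Nat.ceil_lt_add_one (inv_nonneg.2 h0)
  have hone : 1 ≤ lam * ℓ := by rwa [inv_le_iff_one_le_mul₀' hpos] at hge
  have hlt' : lam * ℓ < 1 + lam := by
    have := mul_lt_mul_of_pos_left hlt hpos
    rwa [mul_add, mul_inv_cancel₀ hpos.ne', mul_one] at this
  have hlam : lam ^ 2 * (ℓ ^ 2 / 3) < 1 := by nlinarith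
  have hdiv : 2 * (Fintype.card E : ℝ) / ℓ ≤ 2 * Fintype.card E * lam := by
    rw [div_le_iff₀ (by exact_mod_cast hℓ)]
    nlinarith [(Fintype.card E).cast_nonneg (α := ℝ)]
  linarith [sdf_c1_le_sdf_c1_zero_add v0 v1 hℓ hlam]

theorem card_le_card_mul_maxDeg : Fintype.card E ≤ Fintype.card E * maxDeg v0 v1 := by
  rcases isEmpty_or_nonempty E with hE | hE
  · simp
  obtain ⟨e⟩ := hE
  refine Nat.le_mul_of_pos_right _ ((?_ : 0 < vdeg v0 v1 (v0 e)).trans_le (le_sup (mem_univ _)))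
  exact Nat.add_pos_left (card_pos.2 ⟨e, by simp⟩) _

end Graph

theorem main_sdf_estimate_general {V E : Type*} [Fintype V] [Fintype E] [DecidableEq V]
    (v0 v1 : E → V) (lam : ℝ) (h0 : 0 ≤ lam) :
    (sdf (c1 v0 v1) lam : ℝ) - (sdf (c1 v0 v1) 0 : ℝ) ≤
      2 * (Fintype.card E : ℝ) * (maxDeg v0 v1 : ℝ) * lam := by
  calc _ ≤ 2 * (Fintype.card E : ℝ) * lam := sdf_c1_sub_sdf_c1_zero_le v0 v1 h0
    _ ≤ 2 * ((Fintype.card E * maxDeg v0 v1 : ℕ) : ℝ) * lam := by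
        gcongr
        exact_mod_cast card_le_card_mul_maxDeg v0 v1
    _ = 2 * (Fintype.card E : ℝ) * (maxDeg v0 v1 : ℝ) * lam := by push_cast; ring

/-- Main theorem: for a finite graph X and 0 ≤ λ < 1,
F₁(X)(λ) − F₁(X)(0) ≤ 2·|E(X)|·deg(X)·λ. -/
theorem main_sdf_estimate {V E : Type*} [Fintype V] [Fintype E] [DecidableEq V]
    (v0 v1 : E → V) (lam : ℝ) (h0 : 0 ≤ lam) (h1 : lam < 1) :
    (sdf (c1 v0 v1) lam : ℝ) - (sdf (c1 v0 v1) 0 : ℝ) ≤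
      2 * (Fintype.card E : ℝ) * (maxDeg v0 v1 : ℝ) * lam :=
  main_sdf_estimate_general v0 v1 lam h0
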